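/- Let Q and R be inverse quantal frames and X a Q-R-bisheaf satisfying ⋁_{s∈𝔅_X}⟨s,s⟩ = e_Q and ⋁_{s∈𝔅_X}[s,s] = e_R. Then the following are equivalent: (a) 1_X·ς'(s) ≤ 1_Q·s and ς_X(s)·1_X ≤ s·1_R for all s ∈ 𝔅_X (the conditions making X a biprincipal Q-R-bisheaf); (b) the interchange rule ⟨s,t⟩u = s[t,u] holds for all s, t, u ∈ 𝔅_X. -/

import Mathlib

/-- A unital involutive quantale: a complete lattice with an associative
multiplication preserving arbitrary joins in each variable, a unit `e`, and a
join-preserving involution. -/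
structure Quantale' (Q : Type*) [CompleteLattice Q] where
  mul : Q → Q → Q
  e : Q
  star : Q → Q
  mul_assoc : ∀ a b c, mul (mul a b) c = mul a (mul b c)
  sSup_mul : ∀ (S : Set Q) (b : Q), mul (sSup S) b = ⨆ a ∈ S, mul a b
  mul_sSup : ∀ (a : Q) (S : Set Q), mul a (sSup S) = ⨆ b ∈ S, mul a b
  e_mul : ∀ a, mul e a = a
  mul_e : ∀ a, mul a e = a
  star_star : ∀ a, star (star a) = a
  star_mul : ∀ a b, star (mul a b) = mul (star b) (star a)
  star_sSup : ∀ S : Set Q, star (sSup S) = ⨆ a ∈ S, star a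

/-- The set of partial units of a quantale. -/
def Quantale'.PU {Q : Type*} [CompleteLattice Q] (Qs : Quantale' Q) : Set Q :=
  {s | Qs.mul s (Qs.star s) ≤ Qs.e ∧ Qs.mul (Qs.star s) s ≤ Qs.e}

/-- An inverse quantal frame: a unital involutive quantale which is a frame,
has a stable support, and whose partial units join to the top. -/
structure InverseQuantalFrame (Q : Type*) [Order.Frame Q] extends Quantale' Q where
  supp : Q → Q
  supp_le_e : ∀ a, supp a ≤ e
  supp_sSup : ∀ S : Set Q, supp (sSup S) = ⨆ a ∈ S, supp a
  supp_le_mul_star : ∀ a, supp a ≤ mul a (star a)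
  le_supp_mul : ∀ a, a ≤ mul (supp a) a
  supp_stable : ∀ b a, b ≤ e → supp (mul b a) = mul b (supp a)
  sSup_PU : sSup {s | mul s (star s) ≤ e ∧ mul (star s) s ≤ e} = ⊤

/-- A left module over a quantale: a complete lattice with a unital associative
action preserving arbitrary joins in each variable. -/
structure QuantaleModule {Q : Type*} [CompleteLattice Q] (Qs : Quantale' Q)
    (X : Type*) [CompleteLattice X] where
  act : Q → X → X
  act_mul : ∀ a b x, act (Qs.mul a b) x = act a (act b x)
  act_e : ∀ x, act Qs.e x = x
  sSup_act : ∀ (S : Set Q) (x : X), act (sSup S) x = ⨆ a ∈ S, act a x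
  act_sSup : ∀ (a : Q) (S : Set X), act a (sSup S) = ⨆ x ∈ S, act a x

/-- A pre-Hilbert module over a quantale. -/
structure PreHilbertModule {Q : Type*} [CompleteLattice Q] (Qs : Quantale' Q)
    (X : Type*) [CompleteLattice X] extends QuantaleModule Qs X where
  inner : X → X → Q
  inner_act : ∀ a x y, inner (act a x) y = Qs.mul a (inner x y)
  sSup_inner : ∀ (S : Set X) (y : X), inner (sSup S) y = ⨆ x ∈ S, inner x y
  inner_star : ∀ x y, inner x y = Qs.star (inner y x)

namespace PreHilbertModule

variable {Q X : Type*} [CompleteLattice Q] [CompleteLattice X] {Qs : Quantale' Q}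

/-- A Hilbert section: `⟨x,s⟩s ≤ x` for all `x`. -/
def IsHilbertSection (H : PreHilbertModule Qs X) (s : X) : Prop :=
  ∀ x, H.act (H.inner x s) s ≤ x

/-- A regular element: `⟨s,s⟩s = s`. -/
def IsRegularSection (H : PreHilbertModule Qs X) (s : X) : Prop :=
  H.act (H.inner s s) s = s

/-- A Hilbert basis: `x = ⋁_{t ∈ S} ⟨x,t⟩t` for all `x`. -/
def IsHilbertBasis (H : PreHilbertModule Qs X) (S : Set X) : Prop :=
  ∀ x, x = ⨆ t ∈ S, H.act (H.inner x t) t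

/-- Non-degeneracy of the inner product. -/
def Nondegenerate (H : PreHilbertModule Qs X) : Prop :=
  ∀ x y, (∀ z, H.inner x z = H.inner y z) → x = y

end PreHilbertModule

/-- A `Q`-locale over an inverse quantal frame: a module which is a frame and
satisfies the anchor condition. -/
structure QLocale {Q : Type*} [Order.Frame Q] (Qf : InverseQuantalFrame Q)
    (X : Type*) [Order.Frame X] extends QuantaleModule Qf.toQuantale' X where
  anchor : ∀ b x, b ≤ Qf.e → act b x = act b ⊤ ⊓ x

/-- A `Q`-sheaf over an inverse quantal frame: a pre-Hilbert module which is a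
frame, satisfies the anchor condition, and has a Hilbert basis. -/
structure QSheaf {Q : Type*} [Order.Frame Q] (Qf : InverseQuantalFrame Q)
    (X : Type*) [Order.Frame X] extends PreHilbertModule Qf.toQuantale' X where
  anchor : ∀ b x, b ≤ Qf.e → act b x = act b ⊤ ⊓ x
  hasBasis : ∃ S : Set X, ∀ x, x = ⨆ t ∈ S, act (inner x t) t

namespace QSheaf

variable {Q X : Type*} [Order.Frame Q] [Order.Frame X] {Qf : InverseQuantalFrame Q}

/-- The support `ς_X(x) = ⟨x,x⟩ ∧ e` of a `Q`-sheaf. -/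
def sppX (H : QSheaf Qf X) (x : X) : Q := H.inner x x ⊓ Qf.e

/-- A local section: `ς_X(x)s = x` for all `x ≤ s`. -/
def IsLocalSection (H : QSheaf Qf X) (s : X) : Prop :=
  ∀ x ≤ s, H.act (H.sppX x) s = x

/-- A principal section: a local section with `⟨s,s⟩ ≤ e`. -/
def IsPrincipalSection (H : QSheaf Qf X) (s : X) : Prop :=
  H.IsLocalSection s ∧ H.inner s s ≤ Qf.e

/-- A right local section: `x = s ∧ 1_Q·x` for all `x ≤ s`. -/
def IsRightLocalSection (H : QSheaf Qf X) (s : X) : Prop :=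
  ∀ x ≤ s, x = s ⊓ H.act ⊤ x

/-- A local bisection: simultaneously a local section and a right local section. -/
def IsBisection (H : QSheaf Qf X) (s : X) : Prop :=
  H.IsLocalSection s ∧ H.IsRightLocalSection s

end QSheaf

/-!
Reading the right `R`-structure as a left sheaf over `R` with reversed multiplication
(`QSheaf.ofRight`) makes the situation symmetric in the two sides, so each implication
reduces to one inequality proved for an arbitrary pair of sheaves with commuting actions.

Interchange gives biprincipality by expanding `1_X` in the basis of local bisections:
`(⟨1,t⟩t)[s,s] = ⟨1,t⟩⟨t,s⟩s ≤ 1_Q·s`.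

Conversely, if `⟨t,t⟩ ≤ e` then every `x ≤ 1_Q·t` satisfies `x ≤ ⟨x,t⟩t`: cut `x` along the
partial units `a`, which cover `1_Q`, and note that `a*` moves `x ∧ a·t` below `t`. With
biprincipality this bounds `⟨t,t⟩u = ⟨t,t⟩1_X ∧ u` by `t[t,u]`, and `a ≤ aa*a` gives
`⟨s,t⟩u ≤ ⟨s,t⟩⟨t,t⟩u ≤ ⟨s,t⟩t[t,u] ≤ s[t,u]`.
-/
section SSupPreserving

variable {α β : Type*} [CompleteLattice α] [CompleteLattice β] {f : α → β}

def sSupHom.ofMapSSup (f : α → β) (hf : ∀ S : Set α, f (sSup S) = ⨆ a ∈ S, f a) :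
    sSupHom α β :=
  ⟨f, fun S => by rw [hf, sSup_image]⟩

theorem Monotone.of_map_sSup (hf : ∀ S : Set α, f (sSup S) = ⨆ a ∈ S, f a) : Monotone f :=
  OrderHomClass.mono (sSupHom.ofMapSSup f hf)

theorem map_biSup_of_map_sSup {ι : Type*} (hf : ∀ S : Set α, f (sSup S) = ⨆ a ∈ S, f a)
    (B : Set ι) (g : ι → α) : f (⨆ i ∈ B, g i) = ⨆ i ∈ B, f (g i) :=
  map_iSup₂ (sSupHom.ofMapSSup f hf) fun i (_ : i ∈ B) => g i

end SSupPreserving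

namespace Quantale'

variable {Q : Type*} [CompleteLattice Q] (Qs : Quantale' Q)

theorem mul_mono {a b c d : Q} (hab : a ≤ b) (hcd : c ≤ d) : Qs.mul a c ≤ Qs.mul b d :=
  (Monotone.of_map_sSup (f := (Qs.mul · c)) (fun S => Qs.sSup_mul S c) hab).trans
    (Monotone.of_map_sSup (Qs.mul_sSup b) hcd)

theorem star_mono {a b : Q} (h : a ≤ b) : Qs.star a ≤ Qs.star b :=
  Monotone.of_map_sSup Qs.star_sSup h

end Quantale'

namespace InverseQuantalFrame

variable {Q : Type*} [Order.Frame Q] (Qf : InverseQuantalFrame Q)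

theorem le_mul_star_mul (a : Q) : a ≤ Qf.mul (Qf.mul a (Qf.star a)) a :=
  (Qf.le_supp_mul a).trans (Qf.mul_mono (Qf.supp_le_mul_star a) le_rfl)

theorem star_eq_self_of_le_e {b : Q} (hb : b ≤ Qf.e) : Qf.star b = b := by
  have hle : b ≤ Qf.star b :=
    calc b ≤ Qf.mul (Qf.mul b (Qf.star b)) b := Qf.le_mul_star_mul b
      _ ≤ Qf.mul (Qf.mul Qf.e (Qf.star b)) Qf.e := Qf.mul_mono (Qf.mul_mono hb le_rfl) hb
      _ = Qf.star b := by rw [Qf.e_mul, Qf.mul_e]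
  refine le_antisymm ?_ hle
  simpa only [Qf.star_star] using Qf.star_mono hle

theorem mul_eq_inf_of_le_e {b c : Q} (hb : b ≤ Qf.e) (hc : c ≤ Qf.e) :
    Qf.mul b c = b ⊓ c := by
  refine le_antisymm (le_inf ?_ ?_) ?_
  · simpa only [Qf.mul_e] using Qf.mul_mono le_rfl hc
  · simpa only [Qf.e_mul] using Qf.mul_mono hb le_rfl
  · have hd : b ⊓ c ≤ Qf.e := inf_le_left.trans hb
    calc b ⊓ c ≤ Qf.mul (Qf.mul (b ⊓ c) (Qf.star (b ⊓ c))) (b ⊓ c) := Qf.le_mul_star_mul _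
      _ ≤ Qf.mul (Qf.mul b Qf.e) c :=
        Qf.mul_mono (Qf.mul_mono inf_le_left (by rwa [Qf.star_eq_self_of_le_e hd])) inf_le_right
      _ = Qf.mul b c := by rw [Qf.mul_e]

theorem mul_comm_of_le_e {b c : Q} (hb : b ≤ Qf.e) (hc : c ≤ Qf.e) :
    Qf.mul b c = Qf.mul c b := by
  rw [Qf.mul_eq_inf_of_le_e hb hc, Qf.mul_eq_inf_of_le_e hc hb, inf_comm]

def op : InverseQuantalFrame Q where
  mul a b := Qf.mul b a
  e := Qf.e
  star := Qf.star
  mul_assoc a b c := (Qf.mul_assoc c b a).symm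
  sSup_mul S b := Qf.mul_sSup b S
  mul_sSup a S := Qf.sSup_mul S a
  e_mul := Qf.mul_e
  mul_e := Qf.e_mul
  star_star := Qf.star_star
  star_mul a b := Qf.star_mul b a
  star_sSup := Qf.star_sSup
  supp a := Qf.supp (Qf.star a)
  supp_le_e a := Qf.supp_le_e _
  supp_sSup S := by
    rw [Qf.star_sSup, map_biSup_of_map_sSup Qf.supp_sSup]
  supp_le_mul_star a := by
    simpa only [Qf.star_star] using Qf.supp_le_mul_star (Qf.star a)
  le_supp_mul a := by
    have h := Qf.star_mono (Qf.le_supp_mul (Qf.star a))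
    rwa [Qf.star_mul, Qf.star_star, Qf.star_eq_self_of_le_e (Qf.supp_le_e _)] at h
  supp_stable b a hb := by
    rw [Qf.star_mul, Qf.star_eq_self_of_le_e hb, Qf.supp_stable b _ hb,
      Qf.mul_comm_of_le_e hb (Qf.supp_le_e _)]
  sSup_PU := by
    simpa only [and_comm] using Qf.sSup_PU

end InverseQuantalFrame

namespace QSheaf

variable {Q X : Type*} [Order.Frame Q] [Order.Frame X] {Qf : InverseQuantalFrame Q}
  (H : QSheaf Qf X)

theorem act_mono {a b : Q} {x y : X} (hab : a ≤ b) (hxy : x ≤ y) : H.act a x ≤ H.act b y :=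
  (Monotone.of_map_sSup (f := (H.act · x)) (fun S => H.sSup_act S x) hab).trans
    (Monotone.of_map_sSup (H.act_sSup b) hxy)

theorem inner_mono {x y z w : X} (hxy : x ≤ y) (hzw : z ≤ w) : H.inner x z ≤ H.inner y w := by
  have hleft : ∀ {x y : X} (v : X), x ≤ y → H.inner x v ≤ H.inner y v := fun v h =>
    Monotone.of_map_sSup (f := (H.inner · v)) (fun S => H.sSup_inner S v) h
  refine (hleft z hxy).trans ?_
  rw [H.inner_star y z, H.inner_star y w]
  exact Qf.star_mono (hleft y hzw)

theorem inner_mul_inner_le {x t y : X} (h : H.act (H.inner x t) t ≤ y) :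
    Qf.mul (H.inner x t) (H.inner t x) ≤ H.inner y x := by
  rw [← H.inner_act]
  exact H.inner_mono h le_rfl

theorem inner_le_mul_inner_mul_inner (x t : X) :
    H.inner x t ≤ Qf.mul (Qf.mul (H.inner x t) (H.inner t x)) (H.inner x t) := by
  simpa only [← H.inner_star] using Qf.le_mul_star_mul (H.inner x t)

theorem le_act_inner_self_top (y : X) : y ≤ H.act (H.inner y y) ⊤ := by
  obtain ⟨S, hS⟩ := H.hasBasis
  conv_lhs => rw [hS y]
  refine iSup₂_le fun t ht => ?_
  have hty : H.act (H.inner y t) t ≤ y := by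
    conv_rhs => rw [hS y]
    exact le_biSup (fun t => H.act (H.inner y t) t) ht
  calc H.act (H.inner y t) t
      ≤ H.act (Qf.mul (H.inner y y) (H.inner y t)) ⊤ :=
        H.act_mono ((H.inner_le_mul_inner_mul_inner y t).trans
          (Qf.mul_mono (H.inner_mul_inner_le hty) le_rfl)) le_top
    _ = H.act (H.inner y y) (H.act (H.inner y t) ⊤) := H.act_mul _ _ _
    _ ≤ H.act (H.inner y y) ⊤ := H.act_mono le_rfl le_top

theorem le_act_inner_of_le {u y : X} (huu : H.inner u u ≤ Qf.e) (hyu : y ≤ u) :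
    y ≤ H.act (H.inner y u) u :=
  calc y ≤ H.act (H.inner y y) y := by
        rw [H.anchor _ _ ((H.inner_mono hyu hyu).trans huu)]
        exact le_inf (H.le_act_inner_self_top y) le_rfl
    _ ≤ H.act (H.inner y u) u := H.act_mono (H.inner_mono le_rfl hyu) hyu

theorem le_act_inner_of_le_act_of_mem_PU {a : Q} (ha : a ∈ Qf.PU) {u x : X}
    (huu : H.inner u u ≤ Qf.e) (hx : x ≤ H.act a u) : x ≤ H.act (H.inner x u) u := by
  set y := H.act (Qf.star a) x
  have hay : H.act a y = x := by
    rw [← H.act_mul, H.anchor _ _ ha.1, inf_eq_right]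
    calc x ≤ H.act (Qf.mul (Qf.mul a (Qf.star a)) a) u :=
          hx.trans (H.act_mono (Qf.le_mul_star_mul a) le_rfl)
      _ = H.act (Qf.mul a (Qf.star a)) (H.act a u) := H.act_mul _ _ _
      _ ≤ H.act (Qf.mul a (Qf.star a)) ⊤ := H.act_mono le_rfl le_top
  have hyu : y ≤ u :=
    calc y ≤ H.act (Qf.star a) (H.act a u) := H.act_mono le_rfl hx
      _ = H.act (Qf.mul (Qf.star a) a) ⊤ ⊓ u := by rw [← H.act_mul, H.anchor _ _ ha.2]
      _ ≤ u := inf_le_right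
  calc x = H.act a y := hay.symm
    _ ≤ H.act a (H.act (H.inner y u) u) := H.act_mono le_rfl (H.le_act_inner_of_le huu hyu)
    _ = H.act (H.inner x u) u := by rw [← H.act_mul, ← H.inner_act, hay]

theorem le_act_inner_of_le_act_top {u x : X} (huu : H.inner u u ≤ Qf.e)
    (hx : x ≤ H.act ⊤ u) : x ≤ H.act (H.inner x u) u := by
  have hsplit : x = ⨆ a ∈ Qf.PU, x ⊓ H.act a u := by
    rw [← inf_iSup₂_eq, ← H.sSup_act, show sSup Qf.PU = ⊤ from Qf.sSup_PU, inf_eq_left.2 hx]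
  calc x = ⨆ a ∈ Qf.PU, x ⊓ H.act a u := hsplit
    _ ≤ H.act (H.inner x u) u := iSup₂_le fun a ha =>
      (H.le_act_inner_of_le_act_of_mem_PU ha huu inf_le_right).trans
        (H.act_mono (H.inner_mono inf_le_left le_rfl) le_rfl)

end QSheaf

def QSheaf.ofRight {R X : Type*} [Order.Frame R] [Order.Frame X] (Rf : InverseQuantalFrame R)
    (ract : X → R → X) (rinner : X → X → R)
    (ract_mul : ∀ x r r', ract x (Rf.mul r r') = ract (ract x r) r')
    (ract_e : ∀ x, ract x Rf.e = x)
    (sSup_ract : ∀ (S : Set X) (r : R), ract (sSup S) r = ⨆ x ∈ S, ract x r)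
    (ract_sSup : ∀ (x : X) (S : Set R), ract x (sSup S) = ⨆ r ∈ S, ract x r)
    (right_anchor : ∀ c x, c ≤ Rf.e → ract x c = ract ⊤ c ⊓ x)
    (rinner_ract : ∀ x y r, rinner x (ract y r) = Rf.mul (rinner x y) r)
    (rinner_sSup : ∀ (x : X) (S : Set X), rinner x (sSup S) = ⨆ y ∈ S, rinner x y)
    (rinner_star : ∀ x y, rinner x y = Rf.star (rinner y x))
    (hasBasis : ∃ S : Set X, ∀ x, x = ⨆ s ∈ S, ract s (rinner s x)) :
    QSheaf Rf.op X where
  act r x := ract x r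
  act_mul a b x := ract_mul x b a
  act_e := ract_e
  sSup_act S x := ract_sSup x S
  act_sSup r S := sSup_ract S r
  inner x y := rinner y x
  inner_act a x y := rinner_ract y x a
  sSup_inner S y := rinner_sSup y S
  inner_star x y := rinner_star y x
  anchor c x := right_anchor c x
  hasBasis := hasBasis

section TwoSheaves

variable {Q R X : Type*} [Order.Frame Q] [Order.Frame R] [Order.Frame X]
  {Qf : InverseQuantalFrame Q} {Rf : InverseQuantalFrame R} (H : QSheaf Qf X) (K : QSheaf Rf X)

theorem QSheaf.act_inner_le_act_inner_of_act_inner_top_le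
    (hcomm : ∀ a r x, H.act a (K.act r x) = K.act r (H.act a x)) {s t u : X}
    (hs : H.IsHilbertSection s) (ht : H.IsHilbertSection t)
    (htH : H.inner t t ≤ Qf.e) (htK : K.inner t t ≤ Rf.e)
    (hsupp : H.act (H.inner t t) ⊤ ≤ K.act ⊤ t) :
    H.act (H.inner s t) u ≤ K.act (K.inner u t) s := by
  have hst : H.inner s t ≤ Qf.mul (H.inner s t) (H.inner t t) :=
    calc H.inner s t ≤ Qf.mul (Qf.mul (H.inner s t) (H.inner t s)) (H.inner s t) :=
          H.inner_le_mul_inner_mul_inner s t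
      _ ≤ Qf.mul (H.inner s t) (H.inner t t) := by
          rw [Qf.mul_assoc]
          exact Qf.mul_mono le_rfl (H.inner_mul_inner_le (hs t))
  have hu : H.act (H.inner t t) ⊤ ⊓ u ≤ K.act (K.inner u t) t :=
    (K.le_act_inner_of_le_act_top htK (inf_le_left.trans hsupp)).trans
      (K.act_mono (K.inner_mono inf_le_right le_rfl) le_rfl)
  calc H.act (H.inner s t) u
      ≤ H.act (H.inner s t) (H.act (H.inner t t) u) := by
        rw [← H.act_mul]; exact H.act_mono hst le_rfl
    _ ≤ H.act (H.inner s t) (K.act (K.inner u t) t) := by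
        rw [H.anchor _ _ htH]; exact H.act_mono le_rfl hu
    _ ≤ K.act (K.inner u t) s := by
        rw [hcomm]; exact K.act_mono le_rfl (ht s)

theorem QSheaf.act_inner_self_top_le_act_top
    (hcomm : ∀ a r x, H.act a (K.act r x) = K.act r (H.act a x)) {B : Set X}
    (hB : H.IsHilbertBasis B) {s : X}
    (hI : ∀ t ∈ B, H.act (H.inner t s) s = K.act (K.inner s s) t) :
    K.act (K.inner s s) ⊤ ≤ H.act ⊤ s := by
  rw [hB ⊤, map_biSup_of_map_sSup (K.act_sSup _)]
  refine iSup₂_le fun t ht => ?_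
  rw [← hcomm, ← hI t ht, ← H.act_mul]
  exact H.act_mono le_top le_rfl

end TwoSheaves

/-- For a `Q`-`R`-bisheaf with full inner products
(`⋁_{s∈𝔅}⟨s,s⟩ = e_Q` and `⋁_{s∈𝔅}[s,s] = e_R`), biprincipality (conditions
`1_X·ς'(s) ≤ 1_Q·s` and `ς_X(s)·1_X ≤ s·1_R` for all local bisections `s`) is
equivalent to the interchange rule `⟨s,t⟩u = s[t,u]` on local bisections. -/
theorem stmt19 {Q R X : Type*} [Order.Frame Q] [Order.Frame R] [Order.Frame X]
    (Qf : InverseQuantalFrame Q) (Rf : InverseQuantalFrame R)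
    -- left Q-sheaf structure:
    (H : QSheaf Qf X)
    -- right R-action:
    (ract : X → R → X)
    (ract_mul : ∀ x r r', ract x (Rf.mul r r') = ract (ract x r) r')
    (ract_e : ∀ x, ract x Rf.e = x)
    (sSup_ract : ∀ (S : Set X) (r : R), ract (sSup S) r = ⨆ x ∈ S, ract x r)
    (ract_sSup : ∀ (x : X) (S : Set R), ract x (sSup S) = ⨆ r ∈ S, ract x r)
    (right_anchor : ∀ c x, c ≤ Rf.e → ract x c = ract ⊤ c ⊓ x)
    (bimodule : ∀ a x r, ract (H.act a x) r = H.act a (ract x r))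
    -- R-valued inner product:
    (rinner : X → X → R)
    (rinner_ract : ∀ x y r, rinner x (ract y r) = Rf.mul (rinner x y) r)
    (rinner_sSup : ∀ (x : X) (S : Set X), rinner x (sSup S) = ⨆ y ∈ S, rinner x y)
    (rinner_star : ∀ x y, rinner x y = Rf.star (rinner y x))
    -- the set of local bisections:
    (Bis : Set X)
    (hBis : Bis = {s : X | (∀ x, H.act (H.inner x s) s ≤ x) ∧
                           (∀ x, ract s (rinner s x) ≤ x)})
    -- the local bisections form a Hilbert basis for both structures:
    (hcovL : ∀ x : X, x = ⨆ s ∈ Bis, H.act (H.inner x s) s)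
    (hcovR : ∀ x : X, x = ⨆ s ∈ Bis, ract s (rinner s x))
    -- fullness hypotheses:
    (hfullL : (⨆ s ∈ Bis, H.inner s s) = Qf.e)
    (hfullR : (⨆ s ∈ Bis, rinner s s) = Rf.e) :
    ((∀ s ∈ Bis, ract ⊤ (rinner s s ⊓ Rf.e) ≤ H.act ⊤ s ∧
        H.act (H.sppX s) ⊤ ≤ ract s ⊤) ↔
      (∀ s ∈ Bis, ∀ t ∈ Bis, ∀ u ∈ Bis,
        H.act (H.inner s t) u = ract s (rinner t u))) := by
  let K := QSheaf.ofRight Rf ract rinner ract_mul ract_e sSup_ract ract_sSup right_anchor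
    rinner_ract rinner_sSup rinner_star ⟨Bis, hcovR⟩
  have hcomm : ∀ a r x, H.act a (K.act r x) = K.act r (H.act a x) :=
    fun a r x => (bimodule a x r).symm
  have hsecH : ∀ s ∈ Bis, H.IsHilbertSection s := fun s hs => (hBis ▸ hs).1
  have hsecK : ∀ s ∈ Bis, K.IsHilbertSection s := fun s hs => (hBis ▸ hs).2
  have hunitH : ∀ s ∈ Bis, H.inner s s ≤ Qf.e := fun s hs =>
    (le_biSup (fun t => H.inner t t) hs).trans hfullL.le
  have hunitK : ∀ s ∈ Bis, rinner s s ≤ Rf.e := fun s hs =>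
    (le_biSup (fun t => rinner t t) hs).trans hfullR.le
  constructor
  · intro hA s hs t ht u hu
    obtain ⟨hsuppK, hsuppH⟩ := hA t ht
    rw [inf_eq_left.2 (hunitK t ht)] at hsuppK
    rw [QSheaf.sppX, inf_eq_left.2 (hunitH t ht)] at hsuppH
    exact le_antisymm
      (H.act_inner_le_act_inner_of_act_inner_top_le K hcomm (hsecH s hs) (hsecH t ht)
        (hunitH t ht) (hunitK t ht) hsuppH)
      (K.act_inner_le_act_inner_of_act_inner_top_le H (fun r a x => (hcomm a r x).symm)
        (hsecK u hu) (hsecK t ht) (hunitK t ht) (hunitH t ht) hsuppK)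
  · intro hI s hs
    constructor
    · rw [inf_eq_left.2 (hunitK s hs)]
      exact H.act_inner_self_top_le_act_top K hcomm hcovL fun t ht => hI t ht s hs s hs
    · rw [QSheaf.sppX, inf_eq_left.2 (hunitH s hs)]
      exact K.act_inner_self_top_le_act_top H (fun r a x => (hcomm a r x).symm) hcovR
        fun t ht => (hI s hs s hs t ht).symm
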